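/- arXiv:1010.5668 — 4 statements merged into one kernel-verified Lean document; each statement's English description precedes it below -/
import Mathlib

section
/- Let x and y be future-pointing timelike vectors in the Minkowskian plane L². Then x + y is a future-pointing timelike vector, the reversed triangle inequality ‖x + y‖_h ≥ ‖x‖_h + ‖y‖_h holds, and equality holds if and only if y = c·x for some real number c > 0. -/
/-- The hyperbolic (Minkowskian) norm on ℝ². -/
noncomputable def hnorm (p : ℝ × ℝ) : ℝ := Real.sqrt |p.1 ^ 2 - p.2 ^ 2|

/-- A vector of the Minkowskian plane is future-pointing timelike. -/
def FutureTimelike (p : ℝ × ℝ) : Prop := p.1 ^ 2 - p.2 ^ 2 < 0 ∧ 0 < p.2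

/-!
For future-pointing timelike `x`, `y` the Lagrange-type identity
`⟨x, y⟩² = ‖x‖_h² ‖y‖_h² + (x₁y₂ − x₂y₁)²` together with `⟨x, y⟩ < 0` gives the reversed
Cauchy–Schwarz inequality `‖x‖_h ‖y‖_h ≤ −⟨x, y⟩`, with equality iff `x` and `y` are parallel.
Expanding `‖x + y‖_h² = ‖x‖_h² + ‖y‖_h² − 2⟨x, y⟩` turns it into the reversed triangle
inequality, with the same equality case; parallel future-pointing vectors are positive multiples
of each other.
-/

def minkowskiInner (x y : ℝ × ℝ) : ℝ := x.1 * y.1 - x.2 * y.2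

lemma hnorm_nonneg (p : ℝ × ℝ) : 0 ≤ hnorm p := Real.sqrt_nonneg _

lemma hnorm_sq_of_timelike {p : ℝ × ℝ} (hp : p.1 ^ 2 - p.2 ^ 2 < 0) :
    hnorm p ^ 2 = -minkowskiInner p p := by
  rw [hnorm, Real.sq_sqrt (abs_nonneg _), abs_of_neg hp, minkowskiInner]
  ring

namespace FutureTimelike

variable {x y : ℝ × ℝ}

lemma abs_fst_lt (hx : FutureTimelike x) : |x.1| < x.2 :=
  abs_lt_of_sq_lt_sq (by linarith [hx.1]) hx.2.le

lemma add (hx : FutureTimelike x) (hy : FutureTimelike y) : FutureTimelike (x + y) := by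
  obtain ⟨hx₁, hx₂⟩ := abs_lt.mp hx.abs_fst_lt
  obtain ⟨hy₁, hy₂⟩ := abs_lt.mp hy.abs_fst_lt
  refine ⟨?_, add_pos hx.2 hy.2⟩
  simpa only [Prod.fst_add, Prod.snd_add, sub_neg] using
    sq_lt_sq' (by linarith : -(x.2 + y.2) < x.1 + y.1) (by linarith)

lemma neg_minkowskiInner_pos (hx : FutureTimelike x) (hy : FutureTimelike y) :
    0 < -minkowskiInner x y := by
  have hxy : x.1 * y.1 ≤ |x.1| * |y.1| := abs_mul x.1 y.1 ▸ le_abs_self _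
  have : |x.1| * |y.1| < x.2 * y.2 :=
    mul_lt_mul'' hx.abs_fst_lt hy.abs_fst_lt (abs_nonneg _) (abs_nonneg _)
  unfold minkowskiInner
  linarith

lemma minkowskiInner_sq (hx : FutureTimelike x) (hy : FutureTimelike y) :
    minkowskiInner x y ^ 2 = (hnorm x * hnorm y) ^ 2 + (x.1 * y.2 - x.2 * y.1) ^ 2 := by
  rw [mul_pow, hnorm_sq_of_timelike hx.1, hnorm_sq_of_timelike hy.1, minkowskiInner,
    minkowskiInner, minkowskiInner]
  ring

lemma hnorm_mul_hnorm_le (hx : FutureTimelike x) (hy : FutureTimelike y) :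
    hnorm x * hnorm y ≤ -minkowskiInner x y := by
  rw [← pow_le_pow_iff_left₀ (mul_nonneg (hnorm_nonneg x) (hnorm_nonneg y))
    (hx.neg_minkowskiInner_pos hy).le two_ne_zero, neg_sq, hx.minkowskiInner_sq hy]
  exact le_add_of_nonneg_right (sq_nonneg _)

lemma hnorm_mul_hnorm_eq_iff (hx : FutureTimelike x) (hy : FutureTimelike y) :
    hnorm x * hnorm y = -minkowskiInner x y ↔ x.1 * y.2 = x.2 * y.1 := by
  rw [← sq_eq_sq₀ (mul_nonneg (hnorm_nonneg x) (hnorm_nonneg y))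
    (hx.neg_minkowskiInner_pos hy).le, neg_sq, hx.minkowskiInner_sq hy, left_eq_add,
    sq_eq_zero_iff, sub_eq_zero]

lemma hnorm_add_sq_sub_sq (hx : FutureTimelike x) (hy : FutureTimelike y) :
    hnorm (x + y) ^ 2 - (hnorm x + hnorm y) ^ 2
      = 2 * (-minkowskiInner x y - hnorm x * hnorm y) := by
  rw [add_sq, hnorm_sq_of_timelike (hx.add hy).1, hnorm_sq_of_timelike hx.1,
    hnorm_sq_of_timelike hy.1]
  simp only [minkowskiInner, Prod.fst_add, Prod.snd_add]
  ring

lemma hnorm_add_le (hx : FutureTimelike x) (hy : FutureTimelike y) :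
    hnorm x + hnorm y ≤ hnorm (x + y) := by
  rw [← pow_le_pow_iff_left₀ (add_nonneg (hnorm_nonneg x) (hnorm_nonneg y)) (hnorm_nonneg _)
    two_ne_zero, ← sub_nonneg, hx.hnorm_add_sq_sub_sq hy]
  linarith [hx.hnorm_mul_hnorm_le hy]

lemma hnorm_add_eq_iff (hx : FutureTimelike x) (hy : FutureTimelike y) :
    hnorm (x + y) = hnorm x + hnorm y ↔ x.1 * y.2 = x.2 * y.1 := by
  rw [← hx.hnorm_mul_hnorm_eq_iff hy, ← sq_eq_sq₀ (hnorm_nonneg _)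
    (add_nonneg (hnorm_nonneg x) (hnorm_nonneg y)), ← sub_eq_zero, hx.hnorm_add_sq_sub_sq hy]
  constructor <;> intro h <;> linarith

end FutureTimelike

lemma exists_pos_smul_eq_iff {x y : ℝ × ℝ} (hx : 0 < x.2) (hy : 0 < y.2) :
    (∃ c : ℝ, 0 < c ∧ y = c • x) ↔ x.1 * y.2 = x.2 * y.1 := by
  constructor
  · rintro ⟨c, -, rfl⟩
    simp only [Prod.smul_fst, Prod.smul_snd, smul_eq_mul]
    ring
  · intro h
    refine ⟨y.2 / x.2, div_pos hy hx, Prod.ext ?_ ?_⟩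
    · simp only [Prod.smul_fst, smul_eq_mul]
      field_simp
      linarith
    · simp only [Prod.smul_snd, smul_eq_mul]
      field_simp

theorem reversed_triangle_inequality_timelike
    (x y : ℝ × ℝ) (hx : FutureTimelike x) (hy : FutureTimelike y) :
    FutureTimelike (x + y) ∧
    hnorm (x + y) ≥ hnorm x + hnorm y ∧
    (hnorm (x + y) = hnorm x + hnorm y ↔ ∃ c : ℝ, 0 < c ∧ y = c • x) :=
  ⟨hx.add hy, hx.hnorm_add_le hy,
    (hx.hnorm_add_eq_iff hy).trans (exists_pos_smul_eq_iff hx.2 hy.2).symm⟩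
end

section
/- Let a, b, g, h be positive real numbers with g = b and h ≠ a. Then for every real θ, A(θ) + C(θ) ≠ 0, where A(θ) = 2gb − 2ab·cosh θ and C(θ) = h² − g² − b² − a² + 2ag·cosh θ; that is, the Minkowskian planar 4R linkage has no branching points. -/
theorem cosh_terms_cancel_of_ground_eq_output (a b h θ : ℝ) :
    (2 * b * b - 2 * a * b * Real.cosh θ) +
      (h ^ 2 - b ^ 2 - b ^ 2 - a ^ 2 + 2 * a * b * Real.cosh θ) = h ^ 2 - a ^ 2 := by
  ring

theorem no_branching_points_general (a b g h : ℝ) (ha : 0 < a) (hh : 0 < h) (hgb : g = b) (hha : h ≠ a)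
    (θ : ℝ) :
    (2 * g * b - 2 * a * b * Real.cosh θ) +
      (h ^ 2 - g ^ 2 - b ^ 2 - a ^ 2 + 2 * a * g * Real.cosh θ) ≠ 0 := by
  rw [hgb, cosh_terms_cancel_of_ground_eq_output, sub_ne_zero]
  exact fun hsq => hha ((sq_eq_sq₀ hh.le ha.le).mp hsq)

theorem no_branching_points (a b g h : ℝ) (ha : 0 < a) (hb : 0 < b)
    (hg : 0 < g) (hh : 0 < h) (hgb : g = b) (hha : h ≠ a) (θ : ℝ) :
    (2 * g * b - 2 * a * b * Real.cosh θ) +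
      (h ^ 2 - g ^ 2 - b ^ 2 - a ^ 2 + 2 * a * g * Real.cosh θ) ≠ 0 :=
  no_branching_points_general a b g h ha hh hgb hha θ
end

section
/- Let a, b, g, h be real numbers with a ≠ 0 and g ≠ 0, and let θ be a real number. Then B(θ)² + C(θ)² − A(θ)² = 0 if and only if cosh θ = (a² + g² − (b + h)²)/(2ag) or cosh θ = (a² + g² − (b − h)²)/(2ag), where A(θ) = 2gb − 2ab·cosh θ, B(θ) = 2ab·sinh θ, and C(θ) = h² − g² − b² − a² + 2ag·cosh θ. (These values cosh θ_min = (a² + g² − (b+h)²)/(2ag) and cosh θ_max = (a² + g² − (b−h)²)/(2ag) define the limiting angles of the input crank.) -/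
theorem crank_discriminant_eq_mul {R : Type*} [CommRing R] (a b g h c s : R)
    (hcs : s ^ 2 = c ^ 2 - 1) :
    (2 * a * b * s) ^ 2 + (h ^ 2 - g ^ 2 - b ^ 2 - a ^ 2 + 2 * a * g * c) ^ 2 -
        (2 * g * b - 2 * a * b * c) ^ 2 =
      (2 * a * g * c - (a ^ 2 + g ^ 2 - (b + h) ^ 2)) *
        (2 * a * g * c - (a ^ 2 + g ^ 2 - (b - h) ^ 2)) := by
  linear_combination (2 * a * b) ^ 2 * hcs

theorem mul_sub_eq_zero_iff_eq_div {K : Type*} [Field K] {k c d : K} (hk : k ≠ 0) :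
    k * c - d = 0 ↔ c = d / k := by
  rw [sub_eq_zero, eq_div_iff hk, mul_comm]

theorem input_crank_limits (a b g h θ : ℝ) (ha : a ≠ 0) (hg : g ≠ 0) :
    (2 * a * b * Real.sinh θ) ^ 2 +
      (h ^ 2 - g ^ 2 - b ^ 2 - a ^ 2 + 2 * a * g * Real.cosh θ) ^ 2 -
      (2 * g * b - 2 * a * b * Real.cosh θ) ^ 2 = 0 ↔
    Real.cosh θ = (a ^ 2 + g ^ 2 - (b + h) ^ 2) / (2 * a * g) ∨
    Real.cosh θ = (a ^ 2 + g ^ 2 - (b - h) ^ 2) / (2 * a * g) := by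
  have h2ag : 2 * a * g ≠ 0 := by positivity
  rw [crank_discriminant_eq_mul a b g h _ _ (Real.sinh_sq θ), mul_eq_zero,
    mul_sub_eq_zero_iff_eq_div h2ag, mul_sub_eq_zero_iff_eq_div h2ag]
end

section
/- Let a, b, g, h be real numbers with b ≠ 0 and g ≠ 0, and let ψ be a real number. Then (2ab·sinh ψ)² + (h² − b² − g² − a² − 2gb·cosh ψ)² − (2ag + 2ab·cosh ψ)² = 0 if and only if cosh ψ = ((a + h)² − g² − b²)/(2bg) or cosh ψ = ((a − h)² − g² − b²)/(2bg). (These values cosh ψ_max = ((a+h)² − g² − b²)/(2bg) and cosh ψ_min = ((a−h)² − g² − b²)/(2bg) define the limiting angles of the output crank.) -/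
/-! Since `sinh² ψ = cosh² ψ - 1`, the discriminant is a quadratic polynomial in `cosh ψ`,
and it factors as `(2bg cosh ψ - ((a + h)² - g² - b²)) (2bg cosh ψ - ((a - h)² - g² - b²))`. -/

theorem linkage_discriminant_eq_mul {R : Type*} [CommRing R] (a b g h c s : R)
    (hcs : s ^ 2 = c ^ 2 - 1) :
    (2 * a * b * s) ^ 2 + (h ^ 2 - b ^ 2 - g ^ 2 - a ^ 2 - 2 * g * b * c) ^ 2 -
        (2 * a * g + 2 * a * b * c) ^ 2 =
      (2 * b * g * c - ((a + h) ^ 2 - g ^ 2 - b ^ 2)) *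
        (2 * b * g * c - ((a - h) ^ 2 - g ^ 2 - b ^ 2)) := by
  rw [mul_pow (2 * a * b), hcs]
  ring

theorem mul_sub_mul_mul_sub_eq_zero_iff {K : Type*} [Field K] {k : K} (hk : k ≠ 0) (x p q : K) :
    (k * x - p) * (k * x - q) = 0 ↔ x = p / k ∨ x = q / k := by
  rw [mul_eq_zero, sub_eq_zero, sub_eq_zero, mul_comm k, ← eq_div_iff hk, ← eq_div_iff hk]

theorem output_crank_limits (a b g h ψ : ℝ) (hb : b ≠ 0) (hg : g ≠ 0) :
    (2 * a * b * Real.sinh ψ) ^ 2 +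
      (h ^ 2 - b ^ 2 - g ^ 2 - a ^ 2 - 2 * g * b * Real.cosh ψ) ^ 2 -
      (2 * a * g + 2 * a * b * Real.cosh ψ) ^ 2 = 0 ↔
    Real.cosh ψ = ((a + h) ^ 2 - g ^ 2 - b ^ 2) / (2 * b * g) ∨
    Real.cosh ψ = ((a - h) ^ 2 - g ^ 2 - b ^ 2) / (2 * b * g) := by
  have hsinh : Real.sinh ψ ^ 2 = Real.cosh ψ ^ 2 - 1 := by
    linarith [Real.cosh_sq ψ]
  rw [linkage_discriminant_eq_mul a b g h _ _ hsinh]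
  exact mul_sub_mul_mul_sub_eq_zero_iff (by positivity) _ _ _
end
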